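/- arXiv:1508.02432 — 3 statements merged into one kernel-verified Lean document; each statement's English description precedes it below -/
import Mathlib

section
/- Let D be a UFD, p irreducible, s ≥ 2. The number of distinct annihilator classes of nonzero zero-divisors of D/⟨p^s⟩ is exactly s − 1. -/
/-!
Writing a nonzero class as `p ^ k * m` with `p ∤ m` and `k < s`, the unit-like factor `m` does not
change the annihilator, so every annihilator is that of some `p ^ k`. The class of `p ^ k` is a
nonzero zero-divisor exactly when `1 ≤ k ≤ s - 1`, and distinct exponents are told apart by
`p ^ (s - k)`, which kills `p ^ j` if and only if `k ≤ j`.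
-/

open Ideal Ideal.Quotient

namespace PrimePowerQuotient

variable {D : Type*} [CommRing D] [IsDomain D] {p : D} {s : ℕ}

def powAnnihilator (p : D) (s k : ℕ) : Set (D ⧸ span {p ^ s}) :=
  {y | mk (span {p ^ s}) (p ^ k) * y = 0}

lemma mk_pow_mul_mk_pow_eq_zero_iff (hp : Prime p) {j k : ℕ} :
    mk (span {p ^ s}) (p ^ j) * mk (span {p ^ s}) (p ^ k) = 0 ↔ s ≤ j + k := by
  rw [← map_mul, ← pow_add, eq_zero_iff_dvd, pow_dvd_pow_iff hp.ne_zero hp.not_isUnit]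

lemma mk_pow_eq_zero_iff (hp : Prime p) {k : ℕ} : mk (span {p ^ s}) (p ^ k) = 0 ↔ s ≤ k := by
  simpa using mk_pow_mul_mk_pow_eq_zero_iff (s := s) hp (j := 0) (k := k)

lemma setOf_mk_pow_mul_mul_eq_zero (hp : Prime p) {m : D} (hm : ¬p ∣ m) {k : ℕ} (hk : k ≤ s) :
    {y | mk (span {p ^ s}) (p ^ k * m) * y = 0} = powAnnihilator p s k := by
  ext y
  obtain ⟨c, rfl⟩ := mk_surjective y
  obtain ⟨t, rfl⟩ := Nat.exists_eq_add_of_le hk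
  simp only [powAnnihilator, Set.mem_ofPred_eq, ← map_mul, eq_zero_iff_dvd]
  rw [pow_add, mul_assoc, mul_dvd_mul_iff_left (pow_ne_zero k hp.ne_zero),
    mul_dvd_mul_iff_left (pow_ne_zero k hp.ne_zero)]
  exact ⟨hp.pow_dvd_of_dvd_mul_left t hm, fun h => h.mul_left m⟩

lemma exists_eq_mk_pow_mul [WfDvdMonoid D] (hp : Prime p) {x : D ⧸ span {p ^ s}} (hx : x ≠ 0) :
    ∃ k < s, ∃ m, ¬p ∣ m ∧ x = mk (span {p ^ s}) (p ^ k * m) := by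
  obtain ⟨a, rfl⟩ := mk_surjective x
  have ha : a ≠ 0 := by rintro rfl; exact hx (map_zero _)
  obtain ⟨k, m, hm, rfl⟩ := WfDvdMonoid.max_power_factor ha hp.irreducible
  refine ⟨k, ?_, m, hm, rfl⟩
  by_contra! hsk
  exact hx ((eq_zero_iff_dvd _ _).2 ((pow_dvd_pow p hsk).mul_right m))

lemma exists_setOf_mul_eq_zero_eq_powAnnihilator [WfDvdMonoid D] (hp : Prime p)
    {x w : D ⧸ span {p ^ s}} (hx : x ≠ 0) (hw : w ≠ 0) (hxw : x * w = 0) :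
    ∃ k ∈ Set.Icc 1 (s - 1), {y | x * y = 0} = powAnnihilator p s k := by
  obtain ⟨k, hks, m, hm, rfl⟩ := exists_eq_mk_pow_mul hp hx
  have hann := setOf_mk_pow_mul_mul_eq_zero hp hm hks.le
  refine ⟨k, ⟨Nat.one_le_iff_ne_zero.2 ?_, by omega⟩, hann⟩
  rintro rfl
  have hw' : w ∈ powAnnihilator p s 0 := hann ▸ hxw
  simp [powAnnihilator, hw] at hw'

lemma powAnnihilator_injOn (hp : Prime p) : Set.InjOn (powAnnihilator p s) (Set.Iic s) := by
  have key : ∀ j k, k ≤ s → powAnnihilator p s k ⊆ powAnnihilator p s j → k ≤ j := by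
    intro j k hk hsub
    have hkill : mk (span {p ^ s}) (p ^ (s - k)) ∈ powAnnihilator p s k :=
      (mk_pow_mul_mk_pow_eq_zero_iff hp).2 (by omega)
    have := (mk_pow_mul_mk_pow_eq_zero_iff hp).1 (hsub hkill)
    omega
  intro j hj k hk hjk
  exact le_antisymm (key k j hj hjk.le) (key j k hk hjk.ge)

end PrimePowerQuotient

open PrimePowerQuotient

theorem stmt14_general {D : Type*} [CommRing D] [IsDomain D] [UniqueFactorizationMonoid D]
    (p : D) (hp : Irreducible p) (s : ℕ) :
    ({S : Set (D ⧸ Ideal.span {p ^ s}) | ∃ x : D ⧸ Ideal.span {p ^ s},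
        x ≠ 0 ∧ (∃ w : D ⧸ Ideal.span {p ^ s}, w ≠ 0 ∧ x * w = 0) ∧
        S = {y | x * y = 0}}).ncard = s - 1 := by
  have hprime : Prime p := hp.prime
  have hset : {S : Set (D ⧸ span {p ^ s}) | ∃ x, x ≠ 0 ∧ (∃ w, w ≠ 0 ∧ x * w = 0) ∧
      S = {y | x * y = 0}} = powAnnihilator p s '' Set.Icc 1 (s - 1) := by
    ext S
    constructor
    · rintro ⟨x, hx, ⟨w, hw, hxw⟩, rfl⟩
      obtain ⟨k, hk, hann⟩ := exists_setOf_mul_eq_zero_eq_powAnnihilator hprime hx hw hxw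
      exact ⟨k, hk, hann.symm⟩
    · rintro ⟨k, ⟨hk1, hks⟩, rfl⟩
      refine ⟨mk _ (p ^ k), ?_, ⟨mk _ (p ^ (s - k)), ?_, ?_⟩, rfl⟩
      · rw [Ne, mk_pow_eq_zero_iff hprime]; omega
      · rw [Ne, mk_pow_eq_zero_iff hprime]; omega
      · rw [mk_pow_mul_mk_pow_eq_zero_iff hprime]; omega
  have hinj : Set.InjOn (powAnnihilator p s) (Set.Icc 1 (s - 1)) :=
    (powAnnihilator_injOn hprime).mono fun k hk => Set.mem_Iic.2 (hk.2.trans (Nat.sub_le s 1))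
  rw [hset, hinj.ncard_image]
  simp

theorem stmt14 {D : Type*} [CommRing D] [IsDomain D] [UniqueFactorizationMonoid D]
    (p : D) (hp : Irreducible p) (s : ℕ) (hs : 2 ≤ s) :
    ({S : Set (D ⧸ Ideal.span {p ^ s}) | ∃ x : D ⧸ Ideal.span {p ^ s},
        x ≠ 0 ∧ (∃ w : D ⧸ Ideal.span {p ^ s}, w ≠ 0 ∧ x * w = 0) ∧
        S = {y | x * y = 0}}).ncard = s - 1 :=
  stmt14_general p hp s
end

section
/- Let D be a UFD and p1,...,pA pairwise non-associate irreducibles with A ≥ 2, n = p1⋯pA (squarefree). The number of distinct annihilator classes of nonzero zero-divisors of D/⟨n⟩ is exactly 2^A − 2. -/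
/-!
For `a ∈ D` let `S(a)` be the set of indices `i` with `pᵢ ∣ a`. Since the `pᵢ` are pairwise
non-associate primes, `n ∣ a * b` iff `∏_{i ∉ S(a)} pᵢ ∣ b`. Hence the annihilator of `ā` only
depends on `S(a)`, `ā ≠ 0` iff `S(a)` is a proper subset, and `ā` is a zero divisor iff `S(a)` is
nonempty. The annihilators of the elements `∏_{i ∈ S} pᵢ` are ordered by inclusion exactly as the
sets `S`, so annihilator classes correspond to nonempty proper subsets of the indices.
-/

open Finset

def annihilatorClasses (R : Type*) [MulZeroClass R] : Set (Set R) :=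
  {S | ∃ x : R, x ≠ 0 ∧ (∃ w : R, w ≠ 0 ∧ x * w = 0) ∧ S = {y | x * y = 0}}

theorem ncard_setOf_ne_empty_ne_univ (ι : Type*) [Fintype ι] [DecidableEq ι] :
    {s : Finset ι | s ≠ ∅ ∧ s ≠ univ}.ncard = 2 ^ Fintype.card ι - 2 := by
  have hset : {s : Finset ι | s ≠ ∅ ∧ s ≠ univ} = ↑({∅, univ}ᶜ : Finset (Finset ι)) := by
    ext s
    simp [and_comm]
  rw [hset, Set.ncard_coe_finset, card_compl, Fintype.card_finset]
  by_cases h : (∅ : Finset ι) = univ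
  -- `ι` is empty; truncated subtraction makes `2 ^ 0 - 1` and `2 ^ 0 - 2` agree.
  · have : Fintype.card ι = 0 := by
      rw [← card_univ, ← h, card_empty]
    simp [h, this]
  · rw [card_pair h]

section Divisibility

variable {ι M : Type*} [CommMonoidWithZero M] [IsCancelMulZero M] {p : ι → M}
  (hp : ∀ i, Prime (p i)) (hpa : Pairwise fun i j => ¬Associated (p i) (p j))
include hp hpa

theorem dvd_iff_eq_of_pairwise_not_associated {i j : ι} : p i ∣ p j ↔ i = j := by
  refine ⟨fun h => ?_, fun h => h ▸ dvd_rfl⟩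
  by_contra hij
  exact hpa hij ((hp i).associated_of_dvd (hp j) h)

theorem dvd_prod_iff_mem_of_pairwise_not_associated {s : Finset ι} {i : ι} :
    p i ∣ ∏ j ∈ s, p j ↔ i ∈ s := by
  refine ⟨fun h => ?_, fun hi => dvd_prod_of_mem p hi⟩
  obtain ⟨j, hj, hij⟩ := ((hp i).dvd_finsetProd_iff _).mp h
  rwa [(dvd_iff_eq_of_pairwise_not_associated hp hpa).mp hij]

theorem prod_dvd_prod_iff_subset_of_pairwise_not_associated {s t : Finset ι} :
    ∏ i ∈ s, p i ∣ ∏ i ∈ t, p i ↔ s ⊆ t :=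
  ⟨fun h _ hi => (dvd_prod_iff_mem_of_pairwise_not_associated hp hpa).mp
      ((dvd_prod_of_mem p hi).trans h),
    fun h => prod_dvd_prod_of_subset _ _ _ h⟩

theorem prod_dvd_of_forall_dvd_of_pairwise_not_associated {s : Finset ι} {a : M}
    (h : ∀ i ∈ s, p i ∣ a) : ∏ i ∈ s, p i ∣ a := by
  classical
  induction s using Finset.induction_on generalizing a with
  | empty => simp
  | insert j s hj ih =>
    obtain ⟨b, rfl⟩ := h j (mem_insert_self j s)
    rw [prod_insert hj]
    refine mul_dvd_mul_left _ (ih fun i hi => ?_)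
    refine ((hp i).dvd_or_dvd (h i (mem_insert_of_mem hi))).resolve_left fun hij => hj ?_
    rwa [← (dvd_iff_eq_of_pairwise_not_associated hp hpa).mp hij]

end Divisibility

section DivisorIndices

variable {ι M : Type*} [Fintype ι]

noncomputable def divisorIndices [Dvd M] (p : ι → M) (a : M) : Finset ι := by
  classical exact univ.filter (p · ∣ a)

@[simp]
theorem mem_divisorIndices [Dvd M] {p : ι → M} {a : M} {i : ι} :
    i ∈ divisorIndices p a ↔ p i ∣ a := by
  simp [divisorIndices]

variable [CommMonoidWithZero M] [IsCancelMulZero M] {p : ι → M}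
  (hp : ∀ i, Prime (p i)) (hpa : Pairwise fun i j => ¬Associated (p i) (p j))
include hp hpa

theorem divisorIndices_prod (s : Finset ι) : divisorIndices p (∏ i ∈ s, p i) = s := by
  ext i
  rw [mem_divisorIndices, dvd_prod_iff_mem_of_pairwise_not_associated hp hpa]

theorem prod_univ_dvd_iff (a : M) : ∏ i, p i ∣ a ↔ divisorIndices p a = univ := by
  rw [eq_univ_iff_forall]
  simp only [mem_divisorIndices]
  exact ⟨fun h i => (dvd_prod_of_mem p (mem_univ i)).trans h,
    fun h => prod_dvd_of_forall_dvd_of_pairwise_not_associated hp hpa fun i _ => h i⟩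

theorem prod_univ_dvd_mul_iff [DecidableEq ι] (a b : M) :
    ∏ i, p i ∣ a * b ↔ ∏ i ∈ (divisorIndices p a)ᶜ, p i ∣ b := by
  constructor
  · intro h
    refine prod_dvd_of_forall_dvd_of_pairwise_not_associated hp hpa fun i hi => ?_
    rw [mem_compl, mem_divisorIndices] at hi
    exact ((hp i).dvd_or_dvd ((dvd_prod_of_mem p (mem_univ i)).trans h)).resolve_left hi
  · intro h
    rw [← prod_mul_prod_compl (divisorIndices p a)]
    exact mul_dvd_mul (prod_dvd_of_forall_dvd_of_pairwise_not_associated hp hpa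
      fun i => mem_divisorIndices.mp) h

end DivisorIndices

section Quotient

variable {ι D : Type*} [Fintype ι] [CommRing D] [IsDomain D] {p : ι → D}
  (hp : ∀ i, Prime (p i)) (hpa : Pairwise fun i j => ¬Associated (p i) (p j))
include hp hpa

local notation "π" => Ideal.Quotient.mk (Ideal.span {∏ i, p i})

theorem mk_eq_zero_iff_divisorIndices_eq_univ (a : D) : π a = 0 ↔ divisorIndices p a = univ := by
  rw [Ideal.Quotient.eq_zero_iff_dvd, prod_univ_dvd_iff hp hpa]

theorem mk_mul_mk_eq_zero_iff [DecidableEq ι] (a b : D) :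
    π a * π b = 0 ↔ ∏ i ∈ (divisorIndices p a)ᶜ, p i ∣ b := by
  rw [← map_mul, Ideal.Quotient.eq_zero_iff_dvd, prod_univ_dvd_mul_iff hp hpa]

theorem annihilator_mk_eq [DecidableEq ι] (a : D) :
    {y | π a * y = 0} = {y | π (∏ i ∈ divisorIndices p a, p i) * y = 0} := by
  ext y
  obtain ⟨b, rfl⟩ := Ideal.Quotient.mk_surjective y
  simp only [Set.mem_ofPred_eq, mk_mul_mk_eq_zero_iff hp hpa, divisorIndices_prod hp hpa]

theorem exists_ne_zero_mk_mul_eq_zero_iff (a : D) :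
    (∃ w, w ≠ 0 ∧ π a * w = 0) ↔ divisorIndices p a ≠ ∅ := by
  classical
  constructor
  · rintro ⟨w, hw, hw0⟩ ha
    obtain ⟨b, rfl⟩ := Ideal.Quotient.mk_surjective w
    rw [mk_mul_mk_eq_zero_iff hp hpa, ha, compl_empty] at hw0
    exact hw ((Ideal.Quotient.eq_zero_iff_dvd _ _).mpr hw0)
  · intro ha
    refine ⟨π (∏ i ∈ (divisorIndices p a)ᶜ, p i), ?_,
      (mk_mul_mk_eq_zero_iff hp hpa _ _).mpr dvd_rfl⟩
    rwa [Ne, mk_eq_zero_iff_divisorIndices_eq_univ hp hpa, divisorIndices_prod hp hpa,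
      compl_eq_univ_iff]

theorem annihilator_mk_prod_subset_iff (s t : Finset ι) :
    {y | π (∏ i ∈ s, p i) * y = 0} ⊆ {y | π (∏ i ∈ t, p i) * y = 0} ↔ s ⊆ t := by
  classical
  constructor
  · intro h
    have hs : π (∏ i ∈ sᶜ, p i) ∈ {y | π (∏ i ∈ s, p i) * y = 0} := by
      rw [Set.mem_ofPred_eq, mk_mul_mk_eq_zero_iff hp hpa, divisorIndices_prod hp hpa]
    have ht := h hs
    rw [Set.mem_ofPred_eq, mk_mul_mk_eq_zero_iff hp hpa, divisorIndices_prod hp hpa,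
      prod_dvd_prod_iff_subset_of_pairwise_not_associated hp hpa] at ht
    exact compl_subset_compl.mp ht
  · intro hst y hy
    obtain ⟨c, hc⟩ := (prod_dvd_prod_iff_subset_of_pairwise_not_associated hp hpa).mpr hst
    rw [Set.mem_ofPred_eq, hc, map_mul, mul_right_comm, hy, zero_mul]

theorem annihilator_mk_prod_injective :
    Function.Injective fun s : Finset ι => {y | π (∏ i ∈ s, p i) * y = 0} := fun s t h =>
  (annihilator_mk_prod_subset_iff hp hpa s t).mp h.le |>.antisymm
    ((annihilator_mk_prod_subset_iff hp hpa t s).mp h.ge)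

theorem annihilatorClasses_eq_image :
    annihilatorClasses (D ⧸ Ideal.span {∏ i, p i}) =
      (fun s => {y | π (∏ i ∈ s, p i) * y = 0}) '' {s | s ≠ ∅ ∧ s ≠ univ} := by
  classical
  ext S
  constructor
  · rintro ⟨x, hx, hzd, rfl⟩
    obtain ⟨a, rfl⟩ := Ideal.Quotient.mk_surjective x
    exact ⟨divisorIndices p a, ⟨(exists_ne_zero_mk_mul_eq_zero_iff hp hpa a).mp hzd,
      (mk_eq_zero_iff_divisorIndices_eq_univ hp hpa a).not.mp hx⟩,
      (annihilator_mk_eq hp hpa a).symm⟩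
  · rintro ⟨s, ⟨hs_ne, hs_univ⟩, rfl⟩
    refine ⟨π (∏ i ∈ s, p i), ?_, ?_, rfl⟩
    · rwa [Ne, mk_eq_zero_iff_divisorIndices_eq_univ hp hpa, divisorIndices_prod hp hpa]
    · rwa [exists_ne_zero_mk_mul_eq_zero_iff hp hpa, divisorIndices_prod hp hpa]

end Quotient

theorem stmt15_general {D : Type*} [CommRing D] [IsDomain D] [UniqueFactorizationMonoid D]
    (A : ℕ) (p : Fin A → D) (hp : ∀ i, Irreducible (p i))
    (hpa : ∀ i j, i ≠ j → ¬ Associated (p i) (p j)) :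
    ({S : Set (D ⧸ Ideal.span {∏ i, p i}) | ∃ x : D ⧸ Ideal.span {∏ i, p i},
        x ≠ 0 ∧ (∃ w : D ⧸ Ideal.span {∏ i, p i}, w ≠ 0 ∧ x * w = 0) ∧
        S = {y | x * y = 0}}).ncard = 2 ^ A - 2 := by
  have hprime : ∀ i, Prime (p i) := fun i => (hp i).prime
  have hpa' : Pairwise fun i j => ¬Associated (p i) (p j) := fun i j => hpa i j
  change (annihilatorClasses _).ncard = _
  rw [annihilatorClasses_eq_image hprime hpa',
    (annihilator_mk_prod_injective hprime hpa').injOn.ncard_image,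
    ncard_setOf_ne_empty_ne_univ, Fintype.card_fin]

theorem stmt15 {D : Type*} [CommRing D] [IsDomain D] [UniqueFactorizationMonoid D]
    (A : ℕ) (hA : 2 ≤ A) (p : Fin A → D) (hp : ∀ i, Irreducible (p i))
    (hpa : ∀ i j, i ≠ j → ¬ Associated (p i) (p j)) :
    ({S : Set (D ⧸ Ideal.span {∏ i, p i}) | ∃ x : D ⧸ Ideal.span {∏ i, p i},
        x ≠ 0 ∧ (∃ w : D ⧸ Ideal.span {∏ i, p i}, w ≠ 0 ∧ x * w = 0) ∧
        S = {y | x * y = 0}}).ncard = 2 ^ A - 2 :=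
  stmt15_general A p hp hpa
end

section
/- Let p be a prime. The compressed zero-divisor graph of Z_p[x]/⟨x^n⟩ is isomorphic to the compressed zero-divisor graph of Z/⟨p^n⟩: explicitly, the map sending the class of x^k + ⟨x^n⟩ to the class of p^k + ⟨p^n⟩ (for 1 ≤ k ≤ n−1) is a bijection between annihilator classes of nonzero zero-divisors which preserves the relation 'product is zero'. -/
/-!
Both rings are quotients `R ⧸ (π ^ n)` of a principal ideal domain by a power of an irreducible
element (`X` in `(ZMod p)[X]`, `p` in `ℤ`). In such a quotient every nonzero element is a unit
times `π ^ k` with `k < n`, so its annihilator is that of `π ^ k`, and `π ^ j * π ^ k = 0` exactly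
when `n ≤ j + k`. Hence in both rings the annihilator classes of nonzero zero-divisors are those of
`π ^ k`, `1 ≤ k ≤ n - 1`, each attained once, with the same adjacency relation.
-/

open Polynomial

section ChainRingGenerator

variable {R : Type*} [CommRing R]

/-- The presentation of a finite chain ring by a generator `t` of its maximal ideal, nilpotent of
index `n`. -/
structure IsChainRingGenerator (t : R) (n : ℕ) : Prop where
  pow_eq_zero_iff : ∀ m : ℕ, t ^ m = 0 ↔ n ≤ m
  exists_isUnit_mul_pow : ∀ x : R, x ≠ 0 → ∃ k < n, ∃ u : R, IsUnit u ∧ x = u * t ^ k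

namespace IsChainRingGenerator

variable {t : R} {n : ℕ}

theorem le_of_setOf_pow_mul_eq_zero_subset (ht : IsChainRingGenerator t n) {j k : ℕ} (hj : j ≤ n)
    (h : {y : R | t ^ j * y = 0} ⊆ {y | t ^ k * y = 0}) : j ≤ k := by
  have hmem : t ^ (n - j) ∈ {y : R | t ^ j * y = 0} := by
    rw [Set.mem_ofPred_eq, ← pow_add, ht.pow_eq_zero_iff]
    omega
  have hk := h hmem
  rw [Set.mem_ofPred_eq, ← pow_add, ht.pow_eq_zero_iff] at hk
  omega

theorem existsUnique_setOf_mul_eq_zero_eq (ht : IsChainRingGenerator t n) {x w : R}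
    (hx : x ≠ 0) (hw : w ≠ 0) (hxw : x * w = 0) :
    ∃! k : ℕ, 1 ≤ k ∧ k ≤ n - 1 ∧ {y | x * y = 0} = {y | t ^ k * y = 0} := by
  obtain ⟨k, hkn, u, hu, rfl⟩ := ht.exists_isUnit_mul_pow x hx
  have hann : {y | u * t ^ k * y = 0} = {y | t ^ k * y = 0} := by
    ext y
    simp only [Set.mem_ofPred_eq, mul_assoc, hu.mul_right_eq_zero]
  have hk : k ≠ 0 := by
    rintro rfl
    rw [pow_zero, mul_one, hu.mul_right_eq_zero] at hxw
    exact hw hxw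
  refine ⟨k, ⟨by omega, by omega, hann⟩, ?_⟩
  rintro j ⟨-, hj, hann'⟩
  rw [hann] at hann'
  have := ht.le_of_setOf_pow_mul_eq_zero_subset hkn.le hann'.le
  have := ht.le_of_setOf_pow_mul_eq_zero_subset (by omega) hann'.ge
  omega

end IsChainRingGenerator

end ChainRingGenerator

theorem isChainRingGenerator_mk_of_irreducible {R : Type*} [CommRing R] [IsDomain R]
    [IsPrincipalIdealRing R] {π : R} (hπ : Irreducible π) (n : ℕ) :
    IsChainRingGenerator (Ideal.Quotient.mk (Ideal.span {π ^ n}) π) n where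
  pow_eq_zero_iff m := by
    rw [← map_pow, Ideal.Quotient.eq_zero_iff_mem, Ideal.mem_span_singleton]
    exact pow_dvd_pow_iff hπ.ne_zero hπ.not_isUnit
  exists_isUnit_mul_pow x hx := by
    obtain ⟨a, rfl⟩ := Ideal.Quotient.mk_surjective x
    have ha : a ≠ 0 := by
      rintro rfl
      exact hx (map_zero _)
    obtain ⟨k, b, hb, rfl⟩ := WfDvdMonoid.max_power_factor ha hπ
    have hkn : k < n := by
      by_contra! hnk
      refine hx (Ideal.Quotient.eq_zero_iff_mem.2 (Ideal.mem_span_singleton.2 ?_))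
      exact (pow_dvd_pow π hnk).mul_right b
    have hmax : (Ideal.span {π}).IsMaximal := PrincipalIdealRing.isMaximal_of_irreducible hπ
    have hunit : IsUnit (Ideal.Quotient.mk (Ideal.span {π} ^ n) b) :=
      Ideal.Quotient.isUnit_mk_pow_of_notMem _ (by rwa [Ideal.mem_span_singleton])
    rw [Ideal.span_singleton_pow] at hunit
    exact ⟨k, hkn, _, hunit, by rw [map_mul, map_pow, mul_comm]⟩

open Polynomial in
theorem stmt16_general (p : ℕ) (hp : p.Prime) (n : ℕ) :
    letI : Fact p.Prime := ⟨hp⟩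
    let R1 := Polynomial (ZMod p) ⧸ Ideal.span {(X : Polynomial (ZMod p)) ^ n}
    let R2 := ℤ ⧸ Ideal.span {(p : ℤ) ^ n}
    let φ := Ideal.Quotient.mk (Ideal.span {(X : Polynomial (ZMod p)) ^ n})
    let ψ := Ideal.Quotient.mk (Ideal.span {(p : ℤ) ^ n})
    (∀ S : Set R1, (∃ x : R1, x ≠ 0 ∧ (∃ w : R1, w ≠ 0 ∧ x * w = 0) ∧
        S = {y | x * y = 0}) →
      ∃! k : ℕ, 1 ≤ k ∧ k ≤ n - 1 ∧ S = {y | φ (X ^ k) * y = 0}) ∧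
    (∀ S : Set R2, (∃ x : R2, x ≠ 0 ∧ (∃ w : R2, w ≠ 0 ∧ x * w = 0) ∧
        S = {y | x * y = 0}) →
      ∃! k : ℕ, 1 ≤ k ∧ k ≤ n - 1 ∧ S = {y | ψ ((p : ℤ) ^ k) * y = 0}) ∧
    (∀ j k : ℕ, 1 ≤ j → j ≤ n - 1 → 1 ≤ k → k ≤ n - 1 →
      (φ (X ^ j) * φ (X ^ k) = 0 ↔ ψ ((p : ℤ) ^ j) * ψ ((p : ℤ) ^ k) = 0)) := by
  intro R1 R2 φ ψ
  have : Fact p.Prime := ⟨hp⟩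
  have hX := isChainRingGenerator_mk_of_irreducible (irreducible_X (R := ZMod p)) n
  have hP := isChainRingGenerator_mk_of_irreducible (Nat.prime_iff_prime_int.mp hp).irreducible n
  refine ⟨?_, ?_, fun j k _ _ _ _ => ?_⟩
  · rintro S ⟨x, hx, ⟨w, hw, hxw⟩, rfl⟩
    simpa only [map_pow] using hX.existsUnique_setOf_mul_eq_zero_eq hx hw hxw
  · rintro S ⟨x, hx, ⟨w, hw, hxw⟩, rfl⟩
    simpa only [map_pow] using hP.existsUnique_setOf_mul_eq_zero_eq hx hw hxw
  · simp only [φ, ψ, ← pow_add, map_pow, hX.pow_eq_zero_iff, hP.pow_eq_zero_iff]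

open Polynomial in
theorem stmt16 (p : ℕ) (hp : p.Prime) (n : ℕ) (hn : 2 ≤ n) :
    letI : Fact p.Prime := ⟨hp⟩
    let R1 := Polynomial (ZMod p) ⧸ Ideal.span {(X : Polynomial (ZMod p)) ^ n}
    let R2 := ℤ ⧸ Ideal.span {(p : ℤ) ^ n}
    let φ := Ideal.Quotient.mk (Ideal.span {(X : Polynomial (ZMod p)) ^ n})
    let ψ := Ideal.Quotient.mk (Ideal.span {(p : ℤ) ^ n})
    (∀ S : Set R1, (∃ x : R1, x ≠ 0 ∧ (∃ w : R1, w ≠ 0 ∧ x * w = 0) ∧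
        S = {y | x * y = 0}) →
      ∃! k : ℕ, 1 ≤ k ∧ k ≤ n - 1 ∧ S = {y | φ (X ^ k) * y = 0}) ∧
    (∀ S : Set R2, (∃ x : R2, x ≠ 0 ∧ (∃ w : R2, w ≠ 0 ∧ x * w = 0) ∧
        S = {y | x * y = 0}) →
      ∃! k : ℕ, 1 ≤ k ∧ k ≤ n - 1 ∧ S = {y | ψ ((p : ℤ) ^ k) * y = 0}) ∧
    (∀ j k : ℕ, 1 ≤ j → j ≤ n - 1 → 1 ≤ k → k ≤ n - 1 →
      (φ (X ^ j) * φ (X ^ k) = 0 ↔ ψ ((p : ℤ) ^ j) * ψ ((p : ℤ) ^ k) = 0)) :=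
  stmt16_general p hp n
end
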